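/- Let r : ℂ → ℝ be C², let F = (1/2)(1+|ξ|²)²·∂r/∂ξ̄, and define the surface X : ℂ → ℂ × ℝ by X(ξ) = Φ(ξ, F(ξ), r(ξ)). Then X is orthogonal to the line congruence ξ ↦ (ξ, F(ξ)): for every ξ ∈ ℂ, ⟪∂X/∂x (ξ), U(ξ)⟫ = 0 and ⟪∂X/∂y (ξ), U(ξ)⟫ = 0, where ξ = x + iy. -/

import Mathlib

open Complex ComplexConjugate

noncomputable section

/-- The Euclidean inner product on `ℝ³ ≃ ℂ × ℝ`: `⟪(z₁,t₁),(z₂,t₂)⟫ = Re(z₁ conj z₂) + t₁ t₂`. -/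
def inner3 (p q : ℂ × ℝ) : ℝ := (p.1 * conj q.1).re + p.2 * q.2

/-- Inverse stereographic projection: the unit direction vector of the oriented line `ξ`. -/
def Udir (ξ : ℂ) : ℂ × ℝ :=
  (2 * ξ / ((1 + Complex.normSq ξ : ℝ) : ℂ),
   (1 - Complex.normSq ξ) / (1 + Complex.normSq ξ))

/-- The map `Φ : 𝕃 × ℝ → ℝ³ ≃ ℂ × ℝ` of the correspondence space. -/
def Phi (ξ η : ℂ) (r : ℝ) : ℂ × ℝ :=
  ((2 * (η - conj η * ξ ^ 2) + 2 * ξ * ((1 + Complex.normSq ξ : ℝ) : ℂ) * (r : ℂ))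
      / (((1 + Complex.normSq ξ) ^ 2 : ℝ) : ℂ),
   ((-2 * (η * conj ξ + conj η * ξ)
        + (((1 - Complex.normSq ξ * Complex.normSq ξ) * r : ℝ) : ℂ))).re
      / (1 + Complex.normSq ξ) ^ 2)

/-- Wirtinger derivative ∂/∂ξ̄ of a real-valued function, as a complex number. -/
def wdbarR (r : ℂ → ℝ) (ξ : ℂ) : ℂ :=
  (1 / 2) * ((fderiv ℝ r ξ 1 : ℝ) + Complex.I * (fderiv ℝ r ξ Complex.I : ℝ))

/-- F = (1/2)(1+|ξ|²)² ∂r/∂ξ̄. -/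
def Fcong (r : ℂ → ℝ) (ξ : ℂ) : ℂ :=
  (1 / 2) * ((1 + Complex.normSq ξ) ^ 2 : ℝ) * wdbarR r ξ

/-!
The point `Φ(ξ, η, s)` lies at signed distance `s` from the plane through the origin
perpendicular to `U(ξ)`, whatever `η` is: `⟪Φ(ξ, η, s), U(ξ)⟫ = s`. Hence `X = Φ(ξ, F, r)`
satisfies `⟪X, U⟫ = r`, and differentiating along `v` gives `⟪dX v, U⟫ + ⟪X, dU v⟫ = dr v`.
A direct computation gives `⟪Φ(ξ, η, s), dU v⟫ = 4 Re(η v̄) / (1 + |ξ|²)²`, which for `η = F`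
is `2 Re(∂r/∂ξ̄ · v̄) = dr v`; so `⟪dX v, U⟫ = 0`.
-/

lemma one_add_normSq_pos (ξ : ℂ) : 0 < 1 + normSq ξ :=
  add_pos_of_pos_of_nonneg one_pos (normSq_nonneg ξ)

lemma hasFDerivAt_normSq (ξ : ℂ) : HasFDerivAt normSq (2 • innerSL ℝ ξ) ξ := by
  simpa only [← normSq_eq_norm_sq] using (hasStrictFDerivAt_norm_sq ξ).hasFDerivAt

@[fun_prop]
lemma differentiable_normSq : Differentiable ℝ normSq :=
  fun ξ => (hasFDerivAt_normSq ξ).differentiableAt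

lemma inner3_eq_inner (p q : ℂ × ℝ) :
    inner3 p q = inner ℝ (WithLp.toLp 2 q) (WithLp.toLp 2 p) := by
  simp only [inner3, WithLp.prod_inner_apply, Complex.inner, RCLike.inner_apply, conj_trivial]

lemma inner3_smul_left (a : ℝ) (p q : ℂ × ℝ) : inner3 (a • p) q = a * inner3 p q := by
  rw [inner3_eq_inner, inner3_eq_inner, WithLp.toLp_smul, real_inner_smul_right]

lemma inner3_smul_right (a : ℝ) (p q : ℂ × ℝ) : inner3 p (a • q) = a * inner3 p q := by
  rw [inner3_eq_inner, inner3_eq_inner, WithLp.toLp_smul, real_inner_smul_left]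

lemma inner3_sub_right (p q q' : ℂ × ℝ) : inner3 p (q - q') = inner3 p q - inner3 p q' := by
  rw [inner3_eq_inner, inner3_eq_inner, inner3_eq_inner, WithLp.toLp_sub, inner_sub_left]

lemma fderiv_inner3_apply {f g : ℂ → ℂ × ℝ} {x : ℂ} (hf : DifferentiableAt ℝ f x)
    (hg : DifferentiableAt ℝ g x) (v : ℂ) :
    fderiv ℝ (fun z => inner3 (f z) (g z)) x v =
      inner3 (fderiv ℝ f x v) (g x) + inner3 (f x) (fderiv ℝ g x v) := by
  let e := (WithLp.prodContinuousLinearEquiv 2 ℝ ℂ ℝ).symm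
  have h := fderiv_inner_apply ℝ (e.differentiableAt.comp x hg) (e.differentiableAt.comp x hf) v
  simp only [e.comp_fderiv] at h
  simp only [inner3_eq_inner]
  exact h

lemma Udir_eq_smul (ξ : ℂ) : Udir ξ = (1 + normSq ξ)⁻¹ • (2 * ξ, 1 - normSq ξ) := by
  simp [Udir, div_eq_inv_mul, real_smul]

lemma differentiable_Udir : Differentiable ℝ Udir := by
  simp only [funext Udir_eq_smul]
  fun_prop (disch := exact fun ξ => (one_add_normSq_pos ξ).ne')

lemma fderiv_Udir_apply (ξ v : ℂ) :
    fderiv ℝ Udir ξ v = (1 + normSq ξ)⁻¹ • (2 * v, -(2 * (ξ * conj v).re))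
      - (2 * (ξ * conj v).re / (1 + normSq ξ) ^ 2) • (2 * ξ, 1 - normSq ξ) := by
  have hc := (hasFDerivAt_inv (one_add_normSq_pos ξ).ne').comp ξ
    ((hasFDerivAt_normSq ξ).const_add 1)
  have hw := ((hasFDerivAt_id (𝕜 := ℝ) ξ).const_mul (2 : ℂ)).prodMk
    ((hasFDerivAt_normSq ξ).const_sub 1)
  have hU : Udir = ((fun x : ℝ => x⁻¹) ∘ fun z => 1 + normSq z) •
      fun z => (2 * id z, 1 - normSq z) :=
    funext Udir_eq_smul
  rw [hU, (hc.smul hw).fderiv]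
  simp only [Function.comp_apply, ContinuousLinearMap.comp_smul, id_eq, add_apply, smul_apply,
    ContinuousLinearMap.prod_apply, ContinuousLinearMap.id_apply, smul_eq_mul, neg_apply,
    coe_innerSL_apply, Complex.inner, mul_re, conj_re, conj_im, mul_neg, sub_neg_eq_add, smul_add,
    nsmul_eq_mul, Nat.cast_ofNat, neg_add_rev, Prod.smul_mk, real_smul, ofReal_inv, ofReal_add,
    ofReal_one, ContinuousLinearMap.smulRight_apply, ContinuousLinearMap.comp_apply,
    ContinuousLinearMap.toSpanSingleton_apply, smul_neg, neg_smul, ofReal_mul, ofReal_ofNat,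
    ofReal_pow, Prod.neg_mk, Prod.mk_add_mk, ofReal_div, Prod.mk_sub_mk, Prod.mk.injEq]
  constructor <;> ring

lemma Phi_eq_smul (ξ η : ℂ) (s : ℝ) :
    Phi ξ η s = ((1 + normSq ξ) ^ 2)⁻¹ •
      (2 * (η - conj η * ξ ^ 2) + 2 * ξ * (1 + normSq ξ : ℝ) * s,
        -4 * (η * conj ξ).re + (1 - normSq ξ ^ 2) * s) := by
  refine Prod.ext ?_ ?_
  · rw [Phi, Prod.smul_fst, real_smul, div_eq_inv_mul, ofReal_inv]
  · simp only [Phi, div_eq_inv_mul, Prod.smul_snd, smul_eq_mul, add_re, mul_re, conj_re, conj_im,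
      ofReal_re, neg_re, neg_im, re_ofNat, im_ofNat]
    ring

lemma inner3_Phi_Udir (ξ η : ℂ) (s : ℝ) : inner3 (Phi ξ η s) (Udir ξ) = s := by
  have h := (one_add_normSq_pos ξ).ne'
  rw [Phi_eq_smul, Udir_eq_smul, inner3_smul_left, inner3_smul_right]
  simp only [inner3, normSq_apply, sq, mul_re, mul_im, add_re, sub_re, conj_re, conj_im,
    ofReal_re, ofReal_im, re_ofNat, im_ofNat, add_im, sub_im] at h ⊢
  field_simp
  ring

lemma inner3_Phi_fderiv_Udir (ξ η v : ℂ) (s : ℝ) :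
    inner3 (Phi ξ η s) (fderiv ℝ Udir ξ v) = 4 * (η * conj v).re / (1 + normSq ξ) ^ 2 := by
  have h := (one_add_normSq_pos ξ).ne'
  rw [fderiv_Udir_apply, Phi_eq_smul, inner3_sub_right, inner3_smul_left, inner3_smul_right,
    inner3_smul_right, inner3_smul_left]
  simp only [inner3, normSq_apply, sq, mul_re, mul_im, add_re, sub_re, conj_re, conj_im,
    ofReal_re, ofReal_im, re_ofNat, im_ofNat, add_im, sub_im] at h ⊢
  field_simp
  ring

lemma fderiv_apply_eq_two_mul_re_wdbarR (r : ℂ → ℝ) (ξ v : ℂ) :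
    fderiv ℝ r ξ v = 2 * (wdbarR r ξ * conj v).re := by
  have hv : v = v.re • (1 : ℂ) + v.im • I := by simp
  conv_lhs => rw [hv, map_add, map_smul, map_smul]
  simp only [wdbarR, smul_eq_mul, mul_re, add_re, add_im, mul_im, ofReal_re, ofReal_im, I_re, I_im,
    conj_re, conj_im, one_div, inv_re, inv_im, re_ofNat, im_ofNat, normSq_ofNat]
  ring

lemma four_mul_re_Fcong_mul_conj_div (r : ℂ → ℝ) (ξ v : ℂ) :
    4 * (Fcong r ξ * conj v).re / (1 + normSq ξ) ^ 2 = fderiv ℝ r ξ v := by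
  have h := (one_add_normSq_pos ξ).ne'
  have hF : Fcong r ξ = (((1 + normSq ξ) ^ 2 / 2 : ℝ) : ℂ) * wdbarR r ξ := by
    rw [Fcong, ofReal_div, ofReal_ofNat]
    ring
  rw [fderiv_apply_eq_two_mul_re_wdbarR, hF, mul_assoc, re_ofReal_mul]
  field_simp
  ring

lemma differentiable_Phi_Fcong {r : ℂ → ℝ} (hr : ContDiff ℝ 2 r) :
    Differentiable ℝ fun ξ => Phi ξ (Fcong r ξ) (r ξ) := by
  have hr₁ : Differentiable ℝ r := hr.differentiable (by norm_num)
  have hr₂ : Differentiable ℝ (fderiv ℝ r) :=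
    (hr.fderiv_right (m := 1) (by norm_num)).differentiable one_ne_zero
  simp only [Phi_eq_smul, Fcong, wdbarR]
  fun_prop (disch := exact fun ξ => (pow_pos (one_add_normSq_pos ξ) 2).ne')

lemma inner3_fderiv_Phi_Fcong_Udir {r : ℂ → ℝ} (hr : ContDiff ℝ 2 r) (ξ v : ℂ) :
    inner3 (fderiv ℝ (fun z => Phi z (Fcong r z) (r z)) ξ v) (Udir ξ) = 0 := by
  have hsupport : (fun z => inner3 (Phi z (Fcong r z) (r z)) (Udir z)) = r :=
    funext fun z => inner3_Phi_Udir z _ _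
  have h := fderiv_inner3_apply (differentiable_Phi_Fcong hr ξ) (differentiable_Udir ξ) v
  rw [hsupport, inner3_Phi_fderiv_Udir, four_mul_re_Fcong_mul_conj_div] at h
  linarith

/-- Theorem 1 of the paper, one direction: the surface
`X(ξ) = Φ(ξ, F(ξ), r(ξ))` built from a support function `r` is orthogonal to the
line congruence `ξ ↦ (ξ, F(ξ))`. -/
theorem support_function_surface_orthogonal_to_congruence
    (r : ℂ → ℝ) (hr : ContDiff ℝ 2 r)
    (X : ℂ → ℂ × ℝ) (hX : ∀ ξ, X ξ = Phi ξ (Fcong r ξ) (r ξ)) :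
    ∀ ξ : ℂ,
      inner3 (fderiv ℝ X ξ 1) (Udir ξ) = 0 ∧
      inner3 (fderiv ℝ X ξ Complex.I) (Udir ξ) = 0 := by
  obtain rfl : X = fun ξ => Phi ξ (Fcong r ξ) (r ξ) := funext hX
  exact fun ξ => ⟨inner3_fderiv_Phi_Fcong_Udir hr ξ 1, inner3_fderiv_Phi_Fcong_Udir hr ξ I⟩

end
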